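/- arXiv:2203.12545 — 2 statements merged into one kernel-verified Lean document; each statement's English description precedes it below -/
import Mathlib

section
/- For all nonnegative real numbers a, b and nonnegative reals α, β with α + β = 2, one has (a^α - b^α)(a^β - b^β) ≥ αβ (a - b)^2. -/
open Real Set

lemma convexOn_sinh' : ConvexOn ℝ (Ici (0:ℝ)) Real.sinh := by
  apply convexOn_of_deriv2_nonneg (convex_Ici 0) Real.continuous_sinh.continuousOn
    Real.differentiable_sinh.differentiableOn
  · rw [Real.deriv_sinh]; exact Real.differentiable_cosh.differentiableOn
  · intro x hx
    rw [interior_Ici, mem_Ioi] at hx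
    simp only [Function.iterate_succ, Function.iterate_zero, Function.comp_apply, id_eq,
      Real.deriv_sinh, Real.deriv_cosh]
    exact (Real.sinh_pos_iff.2 hx).le

lemma sinh_mul_le (u y : ℝ) (hu0 : 0 ≤ u) (hu1 : u ≤ 1) (hy : 0 ≤ y) :
    Real.sinh (u * y) ≤ u * Real.sinh y := by
  have h := convexOn_sinh'.2 (mem_Ici.2 le_rfl) (mem_Ici.2 hy)
    (by linarith : (0:ℝ) ≤ 1 - u) hu0 (by ring)
  simpa [Real.sinh_zero] using h

lemma cosh_half (t : ℝ) : Real.cosh t = 2 * Real.sinh (t / 2) ^ 2 + 1 := by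
  have h1 := Real.cosh_sq (t / 2)
  have h2 := Real.cosh_two_mul (t / 2)
  rw [show 2 * (t / 2) = t by ring] at h2
  linarith

lemma cosh_mul_le (u x : ℝ) (hu0 : 0 ≤ u) (hu1 : u ≤ 1) (hx : 0 ≤ x) :
    Real.cosh (u * x) ≤ u ^ 2 * (Real.cosh x - 1) + 1 := by
  have hs : Real.sinh (u * (x / 2)) ≤ u * Real.sinh (x / 2) :=
    sinh_mul_le u (x / 2) hu0 hu1 (by linarith)
  have hsn : 0 ≤ Real.sinh (u * (x / 2)) :=
    Real.sinh_nonneg_iff.2 (mul_nonneg hu0 (by linarith))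
  have hsn2 : 0 ≤ Real.sinh (x / 2) := Real.sinh_nonneg_iff.2 (by linarith)
  have e1 := cosh_half (u * x)
  have e2 := cosh_half x
  rw [show u * x / 2 = u * (x / 2) by ring] at e1
  nlinarith [sq_nonneg (Real.sinh (x/2))]

lemma exp_key (p q α β : ℝ) (hpq : q ≤ p) (hβ : 0 ≤ β) (hβα : β ≤ α) (hαβ : α + β = 2) :
    (Real.exp (p * α) - Real.exp (q * α)) * (Real.exp (p * β) - Real.exp (q * β)) ≥
      α * β * (Real.exp p - Real.exp q) ^ 2 := by
  set u := α - 1 with hu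
  have hu0 : 0 ≤ u := by simp only [hu]; linarith
  have hu1 : u ≤ 1 := by simp only [hu]; linarith
  have hβu : β = 1 - u := by simp only [hu]; linarith
  set t := p - q with ht
  have ht0 : 0 ≤ t := by simp only [ht]; linarith
  have hC := cosh_mul_le u t hu0 hu1 ht0
  set E := Real.exp (p + q) with hE
  have hEpos : 0 < E := Real.exp_pos _
  have a1 : Real.exp (p*α) * Real.exp (p*β) = E * Real.exp t := by
    rw [← Real.exp_add, hE, ← Real.exp_add]; congr 1; simp only [ht]
    linear_combination p * hαβ
  have a2 : Real.exp (q*α) * Real.exp (q*β) = E * Real.exp (-t) := by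
    rw [← Real.exp_add, hE, ← Real.exp_add]; congr 1; simp only [ht]
    linear_combination q * hαβ
  have a3 : Real.exp (p*α) * Real.exp (q*β) = E * Real.exp (u*t) := by
    rw [← Real.exp_add, hE, ← Real.exp_add]; congr 1; simp only [ht, hu]
    linear_combination q * hαβ
  have a4 : Real.exp (q*α) * Real.exp (p*β) = E * Real.exp (-(u*t)) := by
    rw [← Real.exp_add, hE, ← Real.exp_add]; congr 1; simp only [ht, hu]
    linear_combination p * hαβ
  have a5 : Real.exp p ^ 2 = E * Real.exp t := by
    rw [sq, ← Real.exp_add, hE, ← Real.exp_add]; congr 1; simp only [ht]; ring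
  have a6 : Real.exp q ^ 2 = E * Real.exp (-t) := by
    rw [sq, ← Real.exp_add, hE, ← Real.exp_add]; congr 1; simp only [ht]; ring
  have a7 : Real.exp p * Real.exp q = E := by rw [← Real.exp_add, hE]
  have c1 := Real.cosh_eq t
  have c2 := Real.cosh_eq (u*t)
  have g1 : (Real.exp (p*α) - Real.exp (q*α)) * (Real.exp (p*β) - Real.exp (q*β)) =
      2 * E * (Real.cosh t - Real.cosh (u*t)) := by
    linear_combination a1 + a2 - a3 - a4 - 2*E*c1 + 2*E*c2
  have g2 : (Real.exp p - Real.exp q) ^ 2 = 2 * E * (Real.cosh t - 1) := by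
    linear_combination a5 + a6 - 2*a7 - 2*E*c1
  have hab : α * β = 1 - u^2 := by rw [hβu]; simp only [hu]; ring
  rw [g1, g2, hab, ge_iff_le]
  have hct : 1 ≤ Real.cosh t := Real.one_le_cosh t
  nlinarith [mul_le_mul_of_nonneg_left hC hEpos.le, sq_nonneg u]

lemma main_aux (a b α β : ℝ) (hb : 0 ≤ b) (hba : b ≤ a)
    (hβ : 0 ≤ β) (hβα : β ≤ α) (hαβ : α + β = 2) :
    (a ^ α - b ^ α) * (a ^ β - b ^ β) ≥ α * β * (a - b) ^ 2 := by
  have hα1 : 1 ≤ α := by linarith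
  rcases eq_or_lt_of_le hβ with hβ0 | hβ0
  · -- β = 0, α = 2
    rw [← hβ0]
    simp [Real.rpow_zero]
  rcases eq_or_lt_of_le hb with hb0 | hb0
  · -- b = 0
    rw [← hb0]
    rw [Real.zero_rpow (by linarith : α ≠ 0), Real.zero_rpow (ne_of_gt hβ0)]
    have h1 : a ^ α * a ^ β = a ^ (2:ℝ) := by
      rw [← Real.rpow_add' (by linarith) (by rw [hαβ]; norm_num), hαβ]
    have h2 : a ^ (2:ℝ) = a ^ (2:ℕ) := by
      rw [← Real.rpow_natCast a 2]; norm_num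
    have hab1 : α * β ≤ 1 := by nlinarith
    have ha2 : (0:ℝ) ≤ a ^ (2:ℕ) := sq_nonneg a
    calc α * β * (a - 0) ^ 2 ≤ 1 * (a - 0)^2 := by nlinarith
      _ ≤ (a ^ α - 0) * (a ^ β - 0) := by
          rw [sub_zero, sub_zero, sub_zero, h1, h2]; norm_num
  · -- 0 < b ≤ a
    have ha0 : 0 < a := lt_of_lt_of_le hb0 hba
    have hkey := exp_key (Real.log a) (Real.log b) α β
      (Real.log_le_log hb0 hba) hβ hβα hαβ
    rw [Real.exp_log ha0, Real.exp_log hb0] at hkey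
    rw [Real.rpow_def_of_pos ha0, Real.rpow_def_of_pos hb0,
      Real.rpow_def_of_pos ha0, Real.rpow_def_of_pos hb0]
    exact hkey

theorem stmt_0 (a b α β : ℝ) (ha : 0 ≤ a) (hb : 0 ≤ b)
    (hα : 0 ≤ α) (hβ : 0 ≤ β) (hαβ : α + β = 2) :
    (a ^ α - b ^ α) * (a ^ β - b ^ β) ≥ α * β * (a - b) ^ 2 := by
  rcases le_total b a with hba | hab <;> rcases le_total β α with h1 | h2
  · exact main_aux a b α β hb hba hβ h1 hαβ
  · have h := main_aux a b β α hb hba hα h2 (by linarith)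
    nlinarith [h]
  · have h := main_aux b a α β ha hab hβ h1 hαβ
    nlinarith [h]
  · have h := main_aux b a β α ha hab hα h2 (by linarith)
    nlinarith [h]
end

section
/- (De Giorgi iteration lemma) Let Z be a bounded nonnegative function on [t₀, t₁]. Suppose there exist constants A, B, C ≥ 0, exponents α, β > 0, and θ ∈ [0,1) such that for all t₀ ≤ τ < t ≤ t₁ one has Z(t) ≤ θ Z(τ) + A/(t-τ)^α + B/(t-τ)^β + C. Then for every λ ∈ (θ^{1/α}, 1) ∩ (θ^{1/β}, 1), Z(t₁) ≤ A·c(α,λ,θ)/(t₁-t₀)^α + B·c(β,λ,θ)/(t₁-t₀)^β + C/(1-θ), where c(γ,λ,θ) = 1/((1-λ)^γ (1 - θ/λ^γ)). -/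
/-!
Sample `Z` along the geometric sequence `sₙ = t₀ + lⁿ (t₁ - t₀)`, which decreases from `t₁`
to `t₀`, and apply the hypothesis on `[sₙ₊₁, sₙ]`, whose length is `δₙ = (1 - l) lⁿ (t₁ - t₀)`.
Iterating, `Z t₁ ≤ θᴺ Z(s_N) + ∑_{n<N} θⁿ bₙ`, where `bₙ` is the error term `A/δₙ^α + B/δₙ^β + C`
of that step; `θⁿ bₙ` is a combination of the geometric sequences `(θ / l^α)ⁿ`, `(θ / l^β)ⁿ`,
`θⁿ`, whose ratios are `< 1` precisely because `l > θ^{1/α}, θ^{1/β}`. Boundedness of `Z`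
kills `θᴺ Z(s_N)`, and the geometric series sum to the stated constants.
-/

open Filter Finset Topology

lemma le_pow_mul_add_sum_of_le_mul_succ_add {z b : ℕ → ℝ} {θ : ℝ} (hθ : 0 ≤ θ)
    (hz : ∀ n, z n ≤ θ * z (n + 1) + b n) (N : ℕ) :
    z 0 ≤ θ ^ N * z N + ∑ n ∈ range N, θ ^ n * b n := by
  induction N with
  | zero => simp
  | succ N ih =>
    have := mul_le_mul_of_nonneg_left (hz N) (pow_nonneg hθ N)
    rw [sum_range_succ, pow_succ]
    linarith

lemma le_of_le_mul_succ_add_of_hasSum {z b : ℕ → ℝ} {θ M S : ℝ} (hθ0 : 0 ≤ θ) (hθ1 : θ < 1)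
    (hM : ∀ n, z n ≤ M) (hz : ∀ n, z n ≤ θ * z (n + 1) + b n)
    (hS : HasSum (fun n => θ ^ n * b n) S) :
    z 0 ≤ S := by
  have hlim : Tendsto (fun N => θ ^ N * M + ∑ n ∈ range N, θ ^ n * b n) atTop (𝓝 (0 * M + S)) :=
    ((tendsto_pow_atTop_nhds_zero_of_lt_one hθ0 hθ1).mul_const M).add hS.tendsto_sum_nat
  rw [zero_mul, zero_add] at hlim
  refine ge_of_tendsto' hlim fun N => ?_
  calc z 0 ≤ θ ^ N * z N + ∑ n ∈ range N, θ ^ n * b n :=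
        le_pow_mul_add_sum_of_le_mul_succ_add hθ0 hz N
    _ ≤ θ ^ N * M + ∑ n ∈ range N, θ ^ n * b n := by gcongr; exact hM N

lemma hasSum_pow_mul_div_rpow_geom {θ l T γ A : ℝ} (hθ : 0 ≤ θ) (hl0 : 0 < l) (hl1 : l < 1)
    (hT : 0 < T) (hγ : 0 < γ) (hθl : θ ^ (1 / γ) < l) :
    HasSum (fun n : ℕ => θ ^ n * (A / ((1 - l) * l ^ n * T) ^ γ))
      (A * (1 / ((1 - l) ^ γ * (1 - θ / l ^ γ))) / T ^ γ) := by
  have hlγ : 0 < l ^ γ := Real.rpow_pos_of_pos hl0 γ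
  rw [one_div, Real.rpow_inv_lt_iff_of_pos hθ hl0.le hγ] at hθl
  have h1l : 0 < (1 - l) ^ γ := Real.rpow_pos_of_pos (by linarith) γ
  have hTγ : 0 < T ^ γ := Real.rpow_pos_of_pos hT γ
  have hq : θ / l ^ γ < 1 := (div_lt_one hlγ).2 hθl
  have hterm : ∀ n : ℕ, θ ^ n * (A / ((1 - l) * l ^ n * T) ^ γ)
      = A / ((1 - l) ^ γ * T ^ γ) * (θ / l ^ γ) ^ n := by
    intro n
    rw [Real.mul_rpow (by positivity) hT.le, Real.mul_rpow (by linarith) (by positivity),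
      ← Real.rpow_pow_comm hl0.le, div_pow]
    field_simp
  have hval : A * (1 / ((1 - l) ^ γ * (1 - θ / l ^ γ))) / T ^ γ
      = A / ((1 - l) ^ γ * T ^ γ) * (1 - θ / l ^ γ)⁻¹ := by
    have : 0 < 1 - θ / l ^ γ := by linarith
    field_simp
  simp_rw [hterm, hval]
  exact (hasSum_geometric_of_lt_one (div_nonneg hθ hlγ.le) hq).mul_left _

lemma add_pow_mul_sub_mem_Icc {t₀ t₁ l : ℝ} (ht : t₀ ≤ t₁) (hl0 : 0 ≤ l) (hl1 : l ≤ 1) (n : ℕ) :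
    t₀ + l ^ n * (t₁ - t₀) ∈ Set.Icc t₀ t₁ := by
  have hT : 0 ≤ t₁ - t₀ := sub_nonneg.2 ht
  constructor
  · nlinarith [pow_nonneg hl0 n]
  · nlinarith [pow_le_one₀ hl0 hl1 (n := n)]

theorem stmt_2_general (t₀ t₁ : ℝ) (ht : t₀ < t₁) (Z : ℝ → ℝ)
    (hbdd : ∃ M : ℝ, ∀ t ∈ Set.Icc t₀ t₁, Z t ≤ M)
    (A B C α β θ : ℝ)
    (hα : 0 < α) (hβ : 0 < β) (hθ0 : 0 ≤ θ) (hθ1 : θ < 1)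
    (hrec : ∀ τ t : ℝ, t₀ ≤ τ → τ < t → t ≤ t₁ →
      Z t ≤ θ * Z τ + A / (t - τ) ^ α + B / (t - τ) ^ β + C) :
    ∀ l : ℝ, θ ^ (1 / α) < l → θ ^ (1 / β) < l → l < 1 →
      Z t₁ ≤ A * (1 / ((1 - l) ^ α * (1 - θ / l ^ α))) / (t₁ - t₀) ^ α
        + B * (1 / ((1 - l) ^ β * (1 - θ / l ^ β))) / (t₁ - t₀) ^ β
        + C / (1 - θ) := by
  intro l hlα hlβ hl1
  obtain ⟨M, hM⟩ := hbdd
  have hT : 0 < t₁ - t₀ := sub_pos.2 ht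
  have hl0 : 0 < l := (Real.rpow_nonneg hθ0 _).trans_lt hlα
  set s : ℕ → ℝ := fun n => t₀ + l ^ n * (t₁ - t₀)
  have hs_mem : ∀ n, s n ∈ Set.Icc t₀ t₁ := add_pow_mul_sub_mem_Icc ht.le hl0.le hl1.le
  have hgap : ∀ n, s n - s (n + 1) = (1 - l) * l ^ n * (t₁ - t₀) := fun n => by
    simp only [s]; ring
  have hstep : ∀ n, Z (s n) ≤ θ * Z (s (n + 1)) + (A / ((1 - l) * l ^ n * (t₁ - t₀)) ^ α
      + B / ((1 - l) * l ^ n * (t₁ - t₀)) ^ β + C) := fun n => by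
    have hlt : s (n + 1) < s n := by
      rw [← sub_pos, hgap]; exact mul_pos (mul_pos (by linarith) (pow_pos hl0 n)) hT
    have := hrec _ _ (hs_mem (n + 1)).1 hlt (hs_mem n).2
    rw [hgap] at this
    linarith
  have hsum := ((hasSum_pow_mul_div_rpow_geom (A := A) hθ0 hl0 hl1 hT hα hlα).add
    (hasSum_pow_mul_div_rpow_geom (A := B) hθ0 hl0 hl1 hT hβ hlβ)).add
    ((hasSum_geometric_of_lt_one hθ0 hθ1).mul_right C)
  rw [inv_mul_eq_div] at hsum
  simpa only [s, pow_zero, one_mul, add_sub_cancel] using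
    le_of_le_mul_succ_add_of_hasSum hθ0 hθ1 (fun n => hM _ (hs_mem n)) hstep
      (by simpa only [mul_add] using hsum)

theorem stmt_2 (t₀ t₁ : ℝ) (ht : t₀ < t₁) (Z : ℝ → ℝ)
    (hbdd : ∃ M : ℝ, ∀ t ∈ Set.Icc t₀ t₁, Z t ≤ M)
    (hnonneg : ∀ t ∈ Set.Icc t₀ t₁, 0 ≤ Z t)
    (A B C α β θ : ℝ) (hA : 0 ≤ A) (hB : 0 ≤ B) (hC : 0 ≤ C)
    (hα : 0 < α) (hβ : 0 < β) (hθ0 : 0 ≤ θ) (hθ1 : θ < 1)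
    (hrec : ∀ τ t : ℝ, t₀ ≤ τ → τ < t → t ≤ t₁ →
      Z t ≤ θ * Z τ + A / (t - τ) ^ α + B / (t - τ) ^ β + C) :
    ∀ l : ℝ, θ ^ (1 / α) < l → θ ^ (1 / β) < l → l < 1 →
      Z t₁ ≤ A * (1 / ((1 - l) ^ α * (1 - θ / l ^ α))) / (t₁ - t₀) ^ α
        + B * (1 / ((1 - l) ^ β * (1 - θ / l ^ β))) / (t₁ - t₀) ^ β
        + C / (1 - θ) :=
  stmt_2_general t₀ t₁ ht Z hbdd A B C α β θ hα hβ hθ0 hθ1 hrec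
end
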